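/- arXiv:2206.04262 — 6 statements merged into one kernel-verified Lean document; each statement's English description precedes it below -/
import Mathlib

section
/- Let m ≥ 1, κ > 0, λ ≥ 0 and μ_1, …, μ_m with λ < μ_i for each i. Let W_1, …, W_m be independent real random variables, with W_i exponentially distributed with rate μ_i − λ, and let p(w) = 1 − e^{−κw}. Then the repeater-less tandem capacity equals the repeater-assisted tandem capacity: λ · (1 − E[p(W_1 + W_2 + ⋯ + W_m)]) = λ · E[∏_{i=1}^m (1 − p(W_i))], and both equal λ · ∏_{i=1}^m (μ_i − λ)/(κ + μ_i − λ). -/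
open MeasureTheory ProbabilityTheory Real

/-!
Since `1 - p w = e^{-κw}`, the survival probability is multiplicative,
`∏ i, e^{-κ W i} = e^{-κ ∑ i, W i}`, so both capacities are `λ` times the moment generating
function of `∑ i, W i` at `-κ`. By independence it factorises into the mgfs of the `W i`, and an
`Exp(r)` variable has mgf `r / (r - t)` for `t < r`: `e^{tx}` times the `Exp(r)` density is
`r / (r - t)` times the `Exp(r - t)` density.
-/

lemma exponentialPDF_mul_exp {r t : ℝ} (hr : 0 ≤ r) (ht : t < r) (x : ℝ) :
    exponentialPDF r x * ENNReal.ofReal (exp (t * x)) =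
      ENNReal.ofReal (r / (r - t)) * exponentialPDF (r - t) x := by
  rcases lt_or_ge x 0 with hx | hx
  · simp [exponentialPDF_of_neg hx]
  have hrt : 0 < r - t := sub_pos.2 ht
  rw [exponentialPDF_of_nonneg hx, exponentialPDF_of_nonneg hx,
    ← ENNReal.ofReal_mul (by positivity), ← ENNReal.ofReal_mul (by positivity)]
  congr 1
  rw [mul_assoc, ← exp_add, ← mul_assoc, div_mul_cancel₀ r hrt.ne']
  ring_nf

lemma mgf_id_expMeasure {r t : ℝ} (hr : 0 ≤ r) (ht : t < r) :
    mgf id (expMeasure r) t = r / (r - t) := by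
  have hmeas : Measurable fun x : ℝ ↦ exp (t * x) := (measurable_const_mul t).exp
  simp only [mgf, id]
  rw [integral_eq_lintegral_of_nonneg_ae (ae_of_all _ fun _ ↦ (exp_pos _).le)
    hmeas.aestronglyMeasurable, expMeasure, gammaMeasure,
    show gammaPDF 1 r = exponentialPDF r from rfl,
    lintegral_withDensity_eq_lintegral_mul _ (f := exponentialPDF r)
      (measurable_exponentialPDFReal r).ennreal_ofReal hmeas.ennreal_ofReal]
  simp_rw [Pi.mul_apply, exponentialPDF_mul_exp hr ht]
  rw [lintegral_const_mul' _ _ ENNReal.ofReal_ne_top,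
    lintegral_exponentialPDF_eq_one (sub_pos.2 ht), mul_one,
    ENNReal.toReal_ofReal (div_nonneg hr (sub_pos.2 ht).le)]

lemma mgf_of_map_eq_expMeasure {Ω : Type*} [MeasurableSpace Ω] {P : Measure Ω} {X : Ω → ℝ}
    {r t : ℝ} (hr : 0 < r) (ht : t < r) (hX : P.map X = expMeasure r) :
    mgf X P t = r / (r - t) := by
  have := isProbabilityMeasure_expMeasure hr
  have hXm : AEMeasurable X P := aemeasurable_of_map_neZero (hX ▸ inferInstance)
  rw [← mgf_id_map hXm, hX, mgf_id_expMeasure hr.le ht]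

lemma ProbabilityTheory.iIndepFun.mgf_sum_of_map_eq_expMeasure {Ω ι : Type*}
    [MeasurableSpace Ω] [Fintype ι] {P : Measure Ω} {X : ι → Ω → ℝ} {r : ι → ℝ} {t : ℝ} (hind : iIndepFun X P)
    (hr : ∀ i, 0 < r i) (ht : ∀ i, t < r i) (hX : ∀ i, P.map (X i) = expMeasure (r i)) :
    mgf (∑ i, X i) P t = ∏ i, r i / (r i - t) := by
  have hXm : ∀ i, AEMeasurable (X i) P := fun i ↦
    have := isProbabilityMeasure_expMeasure (hr i)
    aemeasurable_of_map_neZero ((hX i) ▸ inferInstance)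
  rw [hind.mgf_sum₀ hXm]
  exact Finset.prod_congr rfl fun i _ ↦ mgf_of_map_eq_expMeasure (hr i) (ht i) (hX i)

theorem stmt2_general {Ω : Type*} [MeasurableSpace Ω] (P : Measure Ω) [IsProbabilityMeasure P]
    (m : ℕ) (kappa lam : ℝ) (hkappa : 0 < kappa)
    (mu : Fin m → ℝ) (hmu : ∀ i, lam < mu i)
    (W : Fin m → Ω → ℝ)
    (hind : iIndepFun W P)
    (hdist : ∀ i, P.map (W i) = expMeasure (mu i - lam))
    (p : ℝ → ℝ) (hp : ∀ w, p w = 1 - Real.exp (-kappa * w)) :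
    lam * (1 - ∫ ω, p (∑ i, W i ω) ∂P) = lam * (∫ ω, ∏ i, (1 - p (W i ω)) ∂P) ∧
    lam * (1 - ∫ ω, p (∑ i, W i ω) ∂P) = lam * ∏ i, (mu i - lam) / (kappa + mu i - lam) ∧
    lam * (∫ ω, ∏ i, (1 - p (W i ω)) ∂P) = lam * ∏ i, (mu i - lam) / (kappa + mu i - lam) := by
  have hr : ∀ i, 0 < mu i - lam := fun i ↦ sub_pos.2 (hmu i)
  have hmgf : mgf (∑ i, W i) P (-kappa) = ∏ i, (mu i - lam) / (kappa + mu i - lam) := by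
    rw [hind.mgf_sum_of_map_eq_expMeasure hr (fun i ↦ by linarith [hr i]) hdist]
    exact Finset.prod_congr rfl fun i _ ↦ by ring_nf
  -- a positive mgf is in particular not the junk value of a non-integrable exponential
  have hint : Integrable (fun ω ↦ exp (-kappa * ∑ i, W i ω)) P := by
    simpa only [Finset.sum_apply] using
      (mgf_pos_iff (X := ∑ i, W i)).1
        (hmgf ▸ Finset.prod_pos fun i _ ↦ div_pos (hr i) (by linarith [hr i]))
  have hE : ∫ ω, exp (-kappa * ∑ i, W i ω) ∂P = ∏ i, (mu i - lam) / (kappa + mu i - lam) := by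
    simpa only [mgf, Finset.sum_apply] using hmgf
  have hsurv : ∫ ω, ∏ i, (1 - p (W i ω)) ∂P = ∏ i, (mu i - lam) / (kappa + mu i - lam) := by
    simp only [hp, sub_sub_cancel, ← exp_sum, ← Finset.mul_sum]
    exact hE
  have herase : ∫ ω, p (∑ i, W i ω) ∂P = 1 - ∏ i, (mu i - lam) / (kappa + mu i - lam) := by
    simp only [hp]
    rw [integral_sub (integrable_const 1) hint, integral_const, probReal_univ, one_smul, hE]
  rw [herase, hsurv, sub_sub_cancel]
  exact ⟨rfl, rfl, rfl⟩

/-- With `p(w) = 1 - e^{-κw}` and independent `W i` exponential with rate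
`μ i - λ`, the repeater-less tandem capacity equals the repeater-assisted tandem capacity:
`λ(1 - E[p(W₁ + ⋯ + W_m)]) = λ E[∏ i (1 - p(W i))]`, and both equal
`λ ∏ i (μ i - λ)/(κ + μ i - λ)`. -/
theorem stmt2 {Ω : Type*} [MeasurableSpace Ω] (P : Measure Ω) [IsProbabilityMeasure P]
    (m : ℕ) (hm : 1 ≤ m) (kappa lam : ℝ) (hkappa : 0 < kappa) (hlam : 0 ≤ lam)
    (mu : Fin m → ℝ) (hmu : ∀ i, lam < mu i)
    (W : Fin m → Ω → ℝ)
    (hind : iIndepFun W P)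
    (hdist : ∀ i, P.map (W i) = expMeasure (mu i - lam))
    (p : ℝ → ℝ) (hp : ∀ w, p w = 1 - Real.exp (-kappa * w)) :
    lam * (1 - ∫ ω, p (∑ i, W i ω) ∂P) = lam * (∫ ω, ∏ i, (1 - p (W i ω)) ∂P) ∧
    lam * (1 - ∫ ω, p (∑ i, W i ω) ∂P) = lam * ∏ i, (mu i - lam) / (kappa + mu i - lam) ∧
    lam * (∫ ω, ∏ i, (1 - p (W i ω)) ∂P) = lam * ∏ i, (mu i - lam) / (kappa + mu i - lam) :=
  stmt2_general P m kappa lam hkappa mu hmu W hind hdist p hp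
end

section
/- Let κ > 0 and μ > 0, and define F : [0, μ] → ℝ by F(x) = x(μ − x)/(κ + μ − x). Then F is strictly concave on [0, μ]. -/
/-!
Since `x (μ - x) = (x + κ)(κ + μ - x) - κ (κ + μ)`, on `x < κ + μ` we have
`F x = x + κ - κ (κ + μ) / (κ + μ - x)`: an affine function minus a positive multiple of the
strictly convex function `x ↦ (κ + μ - x)⁻¹`.
-/

open Set

theorem StrictConvexOn.comp_const_sub {𝕜 E β : Type*} [Ring 𝕜] [PartialOrder 𝕜]
    [AddCommGroup E] [Module 𝕜 E] [AddCommMonoid β] [PartialOrder β] [SMul 𝕜 β]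
    {s : Set E} {f : E → β} (hf : StrictConvexOn 𝕜 s f) (c : E) :
    StrictConvexOn 𝕜 ((fun z => c - z) ⁻¹' s) fun z => f (c - z) := by
  have combo {x y : E} {a b : 𝕜} (hab : a + b = 1) :
      c - (a • x + b • y) = a • (c - x) + b • (c - y) := by
    rw [smul_sub, smul_sub, sub_add_sub_comm, Convex.combo_self hab]
  refine ⟨fun x hx y hy a b ha hb hab => ?_, fun x hx y hy hxy a b ha hb hab => ?_⟩
  · simpa only [mem_preimage, combo hab] using hf.1 hx hy ha hb hab
  · simpa only [combo hab] using hf.2 hx hy (sub_right_injective.ne hxy) ha hb hab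

theorem StrictConvexOn.const_mul {𝕜 E : Type*} [Field 𝕜] [LinearOrder 𝕜] [IsStrictOrderedRing 𝕜]
    [AddCommMonoid E] [Module 𝕜 E] {s : Set E} {f : E → 𝕜} (hf : StrictConvexOn 𝕜 s f)
    {c : 𝕜} (hc : 0 < c) : StrictConvexOn 𝕜 s fun x => c * f x :=
  ⟨hf.1, fun x hx y hy hxy a b ha hb hab => by
    simpa only [smul_eq_mul, mul_add, mul_left_comm c] using
      mul_lt_mul_of_pos_left (hf.2 hx hy hxy ha hb hab) hc⟩

theorem strictConvexOn_inv_const_sub (c : ℝ) : StrictConvexOn ℝ (Iio c) fun x => (c - x)⁻¹ := by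
  have h := (strictConvexOn_zpow (m := -1) (by norm_num) (by norm_num)).comp_const_sub c
  rw [show (fun z => c - z) ⁻¹' Ioi 0 = Iio c by ext; simp] at h
  simpa only [zpow_neg_one] using h

/-- The single queue-channel capacity `F(x) = x(μ - x)/(κ + μ - x)` is strictly
concave on `[0, μ]`. -/
theorem stmt5 (kappa mu : ℝ) (hkappa : 0 < kappa) (hmu : 0 < mu) :
    StrictConcaveOn ℝ (Set.Icc (0 : ℝ) mu)
      (fun x => x * (mu - x) / (kappa + mu - x)) := by
  have hc : 0 < kappa * (kappa + mu) := by positivity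
  have hconc := ((concaveOn_id (convex_Iio (kappa + mu))).add_const kappa).sub_strictConvexOn
    ((strictConvexOn_inv_const_sub (kappa + mu)).const_mul hc)
  have hsub : Icc 0 mu ⊆ Iio (kappa + mu) := fun x hx => show x < kappa + mu by linarith [hx.2]
  refine (hconc.subset hsub (convex_Icc 0 mu)).congr fun x hx => ?_
  have hx : kappa + mu - x ≠ 0 := sub_ne_zero.mpr (hsub hx).ne'
  simp only [Pi.add_apply, Pi.sub_apply, id]
  field_simp
  ring
end

section
/- Let κ > 0 and μ > 0, and define h : [0, 2μ) → ℝ by h(λ) = λ(μ − λ/2)/(κ + μ − λ/2). Then λ* = 2(μ + κ − √(μκ + κ²)) satisfies 0 < λ* < 2μ and h(λ) ≤ h(λ*) for all λ ∈ [0, 2μ). -/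
open Real

/-!
Substituting `d = κ + μ - λ/2`, which ranges over `(κ, κ + μ]`, turns the objective into
`h = 2(2κ + μ) - 2(d + κ(κ + μ)/d)`. By AM-GM, `d + s²/d ≥ 2s` with equality at `d = s`,
where `s = √(κ(κ + μ))`; this `d = s` is exactly `λ = λ*`.
-/

lemma two_mul_le_add_sq_div {d : ℝ} (s : ℝ) (hd : 0 < d) : 2 * s ≤ d + s ^ 2 / d := by
  have hgap : d + s ^ 2 / d - 2 * s = (d - s) ^ 2 / d := by
    field_simp
    ring
  linarith [div_nonneg (sq_nonneg (d - s)) hd.le]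

lemma mul_sub_half_div_eq {K : Type*} [Field K] [CharZero K] (κ μ l : K) (hd : κ + μ - l / 2 ≠ 0) :
    l * (μ - l / 2) / (κ + μ - l / 2)
      = 2 * (2 * κ + μ) - 2 * ((κ + μ - l / 2) + κ * (κ + μ) / (κ + μ - l / 2)) := by
  generalize hdef : κ + μ - l / 2 = d at *
  obtain rfl : l = 2 * (κ + μ - d) := by linear_combination (-2) * hdef
  field_simp
  ring

lemma sqrt_mul_add_sq_mem_Ioo {κ μ : ℝ} (hκ : 0 < κ) (hμ : 0 < μ) :
    √(μ * κ + κ ^ 2) ∈ Set.Ioo κ (μ + κ) := by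
  constructor
  · exact lt_sqrt_of_sq_lt (by nlinarith)
  · exact (sqrt_lt' (by positivity)).2 (by nlinarith)

/-- For `h(λ) = λ(μ - λ/2)/(κ + μ - λ/2)` on `[0, 2μ)`, the point
`λ* = 2(μ + κ - √(μκ + κ²))` lies in `(0, 2μ)` and maximizes `h` on `[0, 2μ)`. -/
theorem stmt6 (kappa mu : ℝ) (hkappa : 0 < kappa) (hmu : 0 < mu)
    (h : ℝ → ℝ) (hh : ∀ lam, h lam = lam * (mu - lam / 2) / (kappa + mu - lam / 2))
    (lamStar : ℝ) (hstar : lamStar = 2 * (mu + kappa - Real.sqrt (mu * kappa + kappa ^ 2))) :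
    0 < lamStar ∧ lamStar < 2 * mu ∧
      ∀ lam ∈ Set.Ico (0 : ℝ) (2 * mu), h lam ≤ h lamStar := by
  obtain ⟨hκs, hsμκ⟩ := sqrt_mul_add_sq_mem_Ioo hkappa hmu
  set s := √(mu * kappa + kappa ^ 2) with hs
  have hs_pos : 0 < s := hkappa.trans hκs
  have hs_sq : kappa * (kappa + mu) = s ^ 2 := by
    rw [hs, sq_sqrt (by positivity)]
    ring
  have hdstar : kappa + mu - lamStar / 2 = s := by
    rw [hstar]
    ring
  refine ⟨by linarith, by linarith, ?_⟩
  rintro lam ⟨-, hlam⟩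
  have hd : 0 < kappa + mu - lam / 2 := by linarith
  rw [hh, hh, mul_sub_half_div_eq _ _ _ hd.ne', mul_sub_half_div_eq _ _ _ (hdstar ▸ hs_pos.ne'),
    hdstar, hs_sq]
  have hs_self : s ^ 2 / s = s := by field_simp
  linarith [two_mul_le_add_sq_div s hd]
end

section
/- Let κ > 0 and μ > 0. For λ ≥ 0 and δ ∈ [0,1] with λδ < μ and λ(1−δ) < μ, define g(λ, δ) = λδ(μ − λδ)/(κ + μ − λδ) + λ(1−δ)(μ − λ(1−δ))/(κ + μ − λ(1−δ)). Then the pair (λ*, δ*) = (2(μ + κ − √(μκ + κ²)), 1/2) is feasible and maximizes g: for every feasible (λ, δ), g(λ, δ) ≤ g(λ*, 1/2). -/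
/-!
Each summand of `g` has the form `x (μ - x) / (κ + μ - x)` with `x` the load of one queue.
With `y = κ + μ - x` and `s = √(μκ + κ²)`, the difference `(μ + 2κ - 2s) - x (μ - x) / y`
equals `(y - s)² / y`, so each summand is at most `μ + 2κ - 2s`, with equality at load
`x = κ + μ - s`. The symmetric split `δ = 1/2` with `λ = 2(κ + μ - s)` puts exactly this load
on both queues.
-/

open Real

section QueueTerm

variable {κ μ s : ℝ}

theorem mul_sub_div_le_of_sq_eq (hs : s ^ 2 = μ * κ + κ ^ 2) {x : ℝ} (hx : x < κ + μ) :
    x * (μ - x) / (κ + μ - x) ≤ μ + 2 * κ - 2 * s := by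
  rw [div_le_iff₀ (by linarith)]
  nlinarith [sq_nonneg (κ + μ - x - s)]

theorem mul_sub_div_eq_of_sq_eq (hs : s ^ 2 = μ * κ + κ ^ 2) (hs0 : s ≠ 0) :
    (κ + μ - s) * (μ - (κ + μ - s)) / (κ + μ - (κ + μ - s)) = μ + 2 * κ - 2 * s := by
  rw [div_eq_iff (by simpa using hs0)]
  linear_combination hs

end QueueTerm

theorem lt_sqrt_mul_add_sq_lt {κ μ : ℝ} (hκ : 0 < κ) (hμ : 0 < μ) :
    κ < √(μ * κ + κ ^ 2) ∧ √(μ * κ + κ ^ 2) < κ + μ := by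
  constructor
  · exact lt_sqrt_of_sq_lt (by nlinarith)
  · exact (sqrt_lt' (by linarith)).2 (by nlinarith)

/-- For homogeneous parallel queue-channels with capacity
`g(λ, δ) = λδ(μ - λδ)/(κ + μ - λδ) + λ(1-δ)(μ - λ(1-δ))/(κ + μ - λ(1-δ))`,
the pair `(λ*, δ*) = (2(μ + κ - √(μκ + κ²)), 1/2)` is feasible and maximizes `g` over all
feasible `(λ, δ)` (i.e. `λ ≥ 0`, `δ ∈ [0,1]`, `λδ < μ`, `λ(1-δ) < μ`). -/
theorem stmt7 (kappa mu : ℝ) (hkappa : 0 < kappa) (hmu : 0 < mu)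
    (g : ℝ → ℝ → ℝ)
    (hg : ∀ lam delta, g lam delta =
      lam * delta * (mu - lam * delta) / (kappa + mu - lam * delta)
        + lam * (1 - delta) * (mu - lam * (1 - delta)) / (kappa + mu - lam * (1 - delta)))
    (lamStar : ℝ) (hstar : lamStar = 2 * (mu + kappa - Real.sqrt (mu * kappa + kappa ^ 2))) :
    (0 ≤ lamStar ∧ (1 / 2 : ℝ) ∈ Set.Icc (0 : ℝ) 1 ∧
        lamStar * (1 / 2) < mu ∧ lamStar * (1 - 1 / 2) < mu) ∧
      ∀ lam delta : ℝ, 0 ≤ lam → delta ∈ Set.Icc (0 : ℝ) 1 →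
        lam * delta < mu → lam * (1 - delta) < mu →
        g lam delta ≤ g lamStar (1 / 2) := by
  set s := √(mu * kappa + kappa ^ 2)
  have hs : s ^ 2 = mu * kappa + kappa ^ 2 := sq_sqrt (by positivity)
  obtain ⟨hκs, hsκμ⟩ := lt_sqrt_mul_add_sq_lt hkappa hmu
  have hload₁ : lamStar * (1 / 2) = kappa + mu - s := by rw [hstar]; ring
  have hload₂ : lamStar * (1 - 1 / 2) = kappa + mu - s := by rw [hstar]; ring
  have hmax : g lamStar (1 / 2) = 2 * (mu + 2 * kappa - 2 * s) := by
    rw [hg, hload₁, hload₂, mul_sub_div_eq_of_sq_eq hs (by linarith)]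
    ring
  refine ⟨⟨by rw [hstar]; linarith, by norm_num, by linarith, by linarith⟩,
    fun lam delta _ _ h₁ h₂ => ?_⟩
  rw [hg, hmax]
  linarith [mul_sub_div_le_of_sq_eq hs (x := lam * delta) (by linarith),
    mul_sub_div_le_of_sq_eq hs (x := lam * (1 - delta)) (by linarith)]
end

section
/- Let κ > 0, μ > 0 and fix λ ∈ [0, 2μ). For δ ∈ [0,1] with λδ < μ and λ(1−δ) < μ, define g(δ) = λδ(μ − λδ)/(κ + μ − λδ) + λ(1−δ)(μ − λ(1−δ))/(κ + μ − λ(1−δ)). Then δ = 1/2 is feasible and g(δ) ≤ g(1/2) for all feasible δ: the equal split is the optimal routing probability for homogeneous parallel queue-channels at any fixed transmission rate. -/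
/-! Writing `s = κ + μ - x`, the per-queue capacity is `x (μ - x) / (κ + μ - x) = μ + 2κ - s - κ(κ + μ) / s`,
a concave function of `x` on `x < κ + μ` because `s ↦ 1 / s` is convex on `s > 0`.
The total capacity `g δ` is the sum of this function at `λδ` and at `λ(1 - δ)`, whose midpoint is `λ / 2`,
so by midpoint concavity it is maximal at `δ = 1 / 2`. -/

noncomputable def queueChannelCapacity (κ μ x : ℝ) : ℝ := x * (μ - x) / (κ + μ - x)

lemma queueChannelCapacity_eq {κ μ x : ℝ} (hx : κ + μ - x ≠ 0) :
    queueChannelCapacity κ μ x = μ + 2 * κ - (κ + μ - x) - κ * (κ + μ) / (κ + μ - x) := by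
  unfold queueChannelCapacity
  field_simp
  ring

lemma div_add_div_sub_four_div_nonneg {c s t : ℝ} (hc : 0 ≤ c) (hs : 0 < s) (ht : 0 < t) :
    0 ≤ c / s + c / t - 4 * c / (s + t) := by
  have hst : 0 < s + t := by linarith
  have key : c / s + c / t - 4 * c / (s + t) = c * (s - t) ^ 2 / (s * t * (s + t)) := by
    field_simp
    ring
  rw [key]
  positivity

lemma queueChannelCapacity_add_le_two_mul_midpoint {κ μ x y : ℝ} (hc : 0 ≤ κ * (κ + μ))
    (hx : x < κ + μ) (hy : y < κ + μ) :
    queueChannelCapacity κ μ x + queueChannelCapacity κ μ y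
      ≤ 2 * queueChannelCapacity κ μ ((x + y) / 2) := by
  have hs : 0 < κ + μ - x := by linarith
  have ht : 0 < κ + μ - y := by linarith
  have hm : κ + μ - (x + y) / 2 = ((κ + μ - x) + (κ + μ - y)) / 2 := by ring
  rw [queueChannelCapacity_eq hs.ne', queueChannelCapacity_eq ht.ne',
    queueChannelCapacity_eq (by linarith), hm]
  have hconv := div_add_div_sub_four_div_nonneg hc hs ht
  have hhalf : ∀ c S : ℝ, 2 * (c / (S / 2)) = 4 * c / S := fun c S ↦ by ring
  linarith [hhalf (κ * (κ + μ)) ((κ + μ - x) + (κ + μ - y))]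

/-- For homogeneous parallel queue-channels at a fixed transmission rate
`λ ∈ [0, 2μ)`, the equal split `δ = 1/2` is feasible and maximizes the capacity
`g(δ) = λδ(μ - λδ)/(κ + μ - λδ) + λ(1-δ)(μ - λ(1-δ))/(κ + μ - λ(1-δ))` over all feasible
`δ ∈ [0,1]` with `λδ < μ` and `λ(1-δ) < μ`. -/
theorem stmt8 (kappa mu lam : ℝ) (hkappa : 0 < kappa) (hmu : 0 < mu)
    (hlam : lam ∈ Set.Ico (0 : ℝ) (2 * mu))
    (g : ℝ → ℝ)
    (hg : ∀ delta, g delta =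
      lam * delta * (mu - lam * delta) / (kappa + mu - lam * delta)
        + lam * (1 - delta) * (mu - lam * (1 - delta)) / (kappa + mu - lam * (1 - delta))) :
    ((1 / 2 : ℝ) ∈ Set.Icc (0 : ℝ) 1 ∧ lam * (1 / 2) < mu ∧ lam * (1 - 1 / 2) < mu) ∧
      ∀ delta ∈ Set.Icc (0 : ℝ) 1, lam * delta < mu → lam * (1 - delta) < mu →
        g delta ≤ g (1 / 2) := by
  have hhalf : lam * (1 / 2) < mu := by linarith [hlam.2]
  refine ⟨⟨by norm_num, hhalf, by norm_num; linarith⟩, fun delta _ h₁ h₂ ↦ ?_⟩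
  have hg' : ∀ d, g d = queueChannelCapacity kappa mu (lam * d)
      + queueChannelCapacity kappa mu (lam * (1 - d)) := hg
  have hmid : (lam * delta + lam * (1 - delta)) / 2 = lam * (1 / 2) := by ring
  calc g delta ≤ 2 * queueChannelCapacity kappa mu (lam * (1 / 2)) := by
        rw [hg', ← hmid]
        exact queueChannelCapacity_add_le_two_mul_midpoint (by positivity)
          (by linarith) (by linarith)
    _ = g (1 / 2) := by rw [hg', show (1 : ℝ) - 1 / 2 = 1 / 2 by norm_num, two_mul]
end

section
/- Let κ > 0, μ_1, μ_2 > 0 and fix λ > 0. On the feasible set D = {δ ∈ [0,1] : λδ < μ_1 and λ(1−δ) < μ_2} (assumed nonempty), the function C_p(δ) = λδ(μ_1 − λδ)/(κ + μ_1 − λδ) + λ(1−δ)(μ_2 − λ(1−δ))/(κ + μ_2 − λ(1−δ)) is strictly concave in δ; consequently C_p has at most one maximizer δ* on D. -/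
/-! Since `u (μ - u) / (κ + μ - u) = u + κ - κ (κ + μ) / (κ + μ - u)`, each summand of `C_p` is an
affine function of the arrival rate `u < μ` minus a positive multiple of the strictly convex
`u ↦ (κ + μ - u)⁻¹`, hence strictly concave in `u`. The arrival rates `λδ` and `λ(1 - δ)` are
injective affine functions of `δ`, so `C_p` is strictly concave on the convex set `D`, where a
strictly concave function has at most one maximizer. -/

open Set

section StrictConvexity

variable {𝕜 E β : Type*} [CommSemiring 𝕜] [PartialOrder 𝕜] [AddCommMonoid β] [PartialOrder β]

theorem StrictConvexOn.smul [AddCommMonoid E] [SMul 𝕜 E] [Module 𝕜 β] [PosSMulStrictMono 𝕜 β]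
    {s : Set E} {f : E → β} {c : 𝕜} (hc : 0 < c) (hf : StrictConvexOn 𝕜 s f) :
    StrictConvexOn 𝕜 s fun x => c • f x :=
  ⟨hf.1, fun x hx y hy hxy a b ha hb hab =>
    calc
      c • f (a • x + b • y) < c • (a • f x + b • f y) :=
        smul_lt_smul_of_pos_left (hf.2 hx hy hxy ha hb hab) hc
      _ = a • c • f x + b • c • f y := by rw [smul_add, smul_comm c, smul_comm c]⟩

end StrictConvexity

section AffinePreimage

variable {𝕜 E F β : Type*} [Ring 𝕜] [PartialOrder 𝕜] [AddCommGroup E] [AddCommGroup F]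
  [Module 𝕜 E] [Module 𝕜 F] [AddCommMonoid β] [PartialOrder β] [SMul 𝕜 β] {s : Set F} {f : F → β}

theorem StrictConvexOn.comp_affineMap (hf : StrictConvexOn 𝕜 s f) (g : E →ᵃ[𝕜] F)
    (hg : Function.Injective g) : StrictConvexOn 𝕜 (g ⁻¹' s) (f ∘ g) :=
  ⟨hf.1.affine_preimage g, fun x hx y hy hxy a b ha hb hab => by
    simpa only [Function.comp_apply, Convex.combo_affine_apply hab]
      using hf.2 hx hy (hg.ne hxy) ha hb hab⟩

theorem StrictConcaveOn.comp_affineMap (hf : StrictConcaveOn 𝕜 s f) (g : E →ᵃ[𝕜] F)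
    (hg : Function.Injective g) : StrictConcaveOn 𝕜 (g ⁻¹' s) (f ∘ g) :=
  hf.dual.comp_affineMap g hg

end AffinePreimage

noncomputable def queueCapacity (κ μ u : ℝ) : ℝ := u * (μ - u) / (κ + μ - u)

theorem queueCapacity_eq_sub_div {κ μ u : ℝ} (h : κ + μ - u ≠ 0) :
    queueCapacity κ μ u = u + κ - κ * (κ + μ) / (κ + μ - u) := by
  unfold queueCapacity
  field_simp
  ring

theorem strictConvexOn_inv_sub (a : ℝ) : StrictConvexOn ℝ (Iio a) fun u => (a - u)⁻¹ := by
  have hg : ∀ u, AffineMap.lineMap a (a - 1) u = a - u := fun u => by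
    rw [AffineMap.lineMap_apply_ring']; ring
  have h := (strictConvexOn_zpow (m := -1) (by norm_num) (by norm_num)).comp_affineMap
    (AffineMap.lineMap a (a - 1)) (AffineMap.lineMap_injective ℝ (sub_one_lt a).ne')
  have hpre : AffineMap.lineMap a (a - 1) ⁻¹' Ioi 0 = Iio a := by ext u; simp [hg]
  rw [hpre] at h
  exact h.congr fun u _ => by simp [hg]

theorem strictConcaveOn_queueCapacity {κ μ : ℝ} (hκ : 0 < κ) (hκμ : 0 < κ + μ) :
    StrictConcaveOn ℝ (Iio μ) (queueCapacity κ μ) := by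
  have hsub : Iio μ ⊆ Iio (κ + μ) := Iio_subset_Iio (by linarith)
  have h := (((strictConvexOn_inv_sub (κ + μ)).subset hsub (convex_Iio μ)).smul
    (mul_pos hκ hκμ)).neg.add_concaveOn ((concaveOn_id (convex_Iio μ)).add_const κ)
  refine h.congr fun u hu => ?_
  rw [queueCapacity_eq_sub_div (by linarith [mem_Iio.1 hu])]
  simp only [Pi.add_apply, Pi.neg_apply, smul_eq_mul, id]
  ring

theorem strictConcaveOn_queueCapacity_add_queueCapacity {κ μ₁ μ₂ r : ℝ} (hκ : 0 < κ)
    (hκμ₁ : 0 < κ + μ₁) (hκμ₂ : 0 < κ + μ₂) (hr : r ≠ 0) :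
    StrictConcaveOn ℝ {δ | r * δ < μ₁ ∧ r * (1 - δ) < μ₂}
      fun δ => queueCapacity κ μ₁ (r * δ) + queueCapacity κ μ₂ (r * (1 - δ)) := by
  have h₁ : ∀ δ, AffineMap.lineMap 0 r δ = r * δ := fun δ => by
    rw [AffineMap.lineMap_apply_ring']; ring
  have h₂ : ∀ δ, AffineMap.lineMap r 0 δ = r * (1 - δ) := fun δ => by
    rw [AffineMap.lineMap_apply_ring']; ring
  have hq₁ := (strictConcaveOn_queueCapacity hκ hκμ₁).comp_affineMap (AffineMap.lineMap 0 r)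
    (AffineMap.lineMap_injective ℝ hr.symm)
  have hq₂ := (strictConcaveOn_queueCapacity hκ hκμ₂).comp_affineMap (AffineMap.lineMap r 0)
    (AffineMap.lineMap_injective ℝ hr)
  have hsum := (hq₁.subset inter_subset_left (hq₁.1.inter hq₂.1)).add
    (hq₂.subset inter_subset_right (hq₁.1.inter hq₂.1))
  simp only [preimage, h₁, h₂, mem_Iio, Function.comp_def] at hsum
  exact hsum

theorem stmt9_general (kappa mu1 mu2 lam : ℝ) (hkappa : 0 < kappa) (hmu1 : 0 < mu1) (hmu2 : 0 < mu2)
    (hlam : 0 < lam)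
    (D : Set ℝ)
    (hD : D = {delta : ℝ | delta ∈ Set.Icc (0 : ℝ) 1 ∧ lam * delta < mu1 ∧
      lam * (1 - delta) < mu2})
    (Cp : ℝ → ℝ)
    (hCp : ∀ delta, Cp delta =
      lam * delta * (mu1 - lam * delta) / (kappa + mu1 - lam * delta)
        + lam * (1 - delta) * (mu2 - lam * (1 - delta)) / (kappa + mu2 - lam * (1 - delta))) :
    StrictConcaveOn ℝ D Cp ∧
      ∀ d1 ∈ D, ∀ d2 ∈ D,
        (∀ d ∈ D, Cp d ≤ Cp d1) → (∀ d ∈ D, Cp d ≤ Cp d2) → d1 = d2 := by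
  have h := strictConcaveOn_queueCapacity_add_queueCapacity (μ₁ := mu1) (μ₂ := mu2) hkappa
    (by linarith) (by linarith) hlam.ne'
  have hD' : D = Icc 0 1 ∩ {δ | lam * δ < mu1 ∧ lam * (1 - δ) < mu2} := hD
  have hsc : StrictConcaveOn ℝ D Cp :=
    (h.subset (hD' ▸ inter_subset_right) (hD' ▸ (convex_Icc 0 1).inter h.1)).congr
      fun δ _ => (hCp δ).symm
  exact ⟨hsc, fun d1 hd1 d2 hd2 hmax1 hmax2 => hsc.eq_of_isMaxOn hmax1 hmax2 hd1 hd2⟩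

/-- For heterogeneous parallel queue-channels at a fixed rate `λ > 0`, the
capacity `C_p(δ)` is strictly concave in `δ` on the nonempty feasible set
`D = {δ ∈ [0,1] : λδ < μ₁ ∧ λ(1-δ) < μ₂}`; consequently `C_p` has at most one maximizer
on `D`. -/
theorem stmt9 (kappa mu1 mu2 lam : ℝ) (hkappa : 0 < kappa) (hmu1 : 0 < mu1) (hmu2 : 0 < mu2)
    (hlam : 0 < lam)
    (D : Set ℝ)
    (hD : D = {delta : ℝ | delta ∈ Set.Icc (0 : ℝ) 1 ∧ lam * delta < mu1 ∧
      lam * (1 - delta) < mu2})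
    (hne : D.Nonempty)
    (Cp : ℝ → ℝ)
    (hCp : ∀ delta, Cp delta =
      lam * delta * (mu1 - lam * delta) / (kappa + mu1 - lam * delta)
        + lam * (1 - delta) * (mu2 - lam * (1 - delta)) / (kappa + mu2 - lam * (1 - delta))) :
    StrictConcaveOn ℝ D Cp ∧
      ∀ d1 ∈ D, ∀ d2 ∈ D,
        (∀ d ∈ D, Cp d ≤ Cp d1) → (∀ d ∈ D, Cp d ≤ Cp d2) → d1 = d2 :=
  stmt9_general kappa mu1 mu2 lam hkappa hmu1 hmu2 hlam D hD Cp hCp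
end
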